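/- arXiv:quant-ph/9910026 — 5 statements merged into one kernel-verified Lean document; each statement's English description precedes it below -/
import Mathlib

section
/- If ρ is a separable bipartite density matrix on ℂ^n ⊗ ℂ^m, i.e., ρ = Σ_i p_i |α_i⟩⟨α_i| ⊗ |β_i⟩⟨β_i| with p_i ≥ 0, then the partial transpose (1⊗T)(ρ) is positive semidefinite. -/
open scoped BigOperators ComplexOrder

def partialTranspose {n m : ℕ} (M : Matrix (Fin n × Fin m) (Fin n × Fin m) ℂ) :
    Matrix (Fin n × Fin m) (Fin n × Fin m) ℂ :=
  Matrix.of fun p q => M (p.1, q.2) (q.1, p.2)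

/-!
The partial transpose is linear and maps the product state `|a ⊗ b⟩⟨a ⊗ b|` to the product
state `|a ⊗ b̄⟩⟨a ⊗ b̄|`, which is positive semidefinite; a nonnegative combination of positive
semidefinite matrices is positive semidefinite.
-/

open Matrix

section

variable {n m : ℕ}

def partialTransposeLinearMap :
    Matrix (Fin n × Fin m) (Fin n × Fin m) ℂ →ₗ[ℂ] Matrix (Fin n × Fin m) (Fin n × Fin m) ℂ where
  toFun := partialTranspose
  map_add' _ _ := rfl
  map_smul' _ _ := rfl

def prodVec (a : Fin n → ℂ) (b : Fin m → ℂ) : Fin n × Fin m → ℂ :=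
  fun x => a x.1 * b x.2

theorem partialTranspose_vecMulVec_prodVec (a : Fin n → ℂ) (b : Fin m → ℂ) :
    partialTranspose (vecMulVec (prodVec a b) (star (prodVec a b))) =
      vecMulVec (prodVec a (star b)) (star (prodVec a (star b))) := by
  ext x y
  simp only [partialTranspose, prodVec, of_apply, vecMulVec_apply, Pi.star_apply, star_mul',
    star_star]
  ring

theorem posSemidef_partialTranspose_vecMulVec_prodVec (a : Fin n → ℂ) (b : Fin m → ℂ) :
    (partialTranspose (vecMulVec (prodVec a b) (star (prodVec a b)))).PosSemidef := by
  rw [partialTranspose_vecMulVec_prodVec]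
  exact posSemidef_vecMulVec_self_star _

end

/-- If `ρ = Σ_i p_i |α_i⟩⟨α_i| ⊗ |β_i⟩⟨β_i|` is a separable
bipartite density matrix (with `p_i ≥ 0`), then its partial transpose is
positive semidefinite. -/
theorem stmt_2 (n m N : ℕ) (p : Fin N → ℝ) (hp : ∀ i, 0 ≤ p i)
    (α : Fin N → Fin n → ℂ) (β : Fin N → Fin m → ℂ)
    (ρ : Matrix (Fin n × Fin m) (Fin n × Fin m) ℂ)
    (hρ : ρ = ∑ i : Fin N, (p i : ℂ) • Matrix.of (fun x y : Fin n × Fin m =>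
        (α i x.1 * β i x.2) * star (α i y.1 * β i y.2))) :
    (partialTranspose ρ).PosSemidef := by
  subst hρ
  change (partialTransposeLinearMap
    (∑ i, (p i : ℂ) • vecMulVec (prodVec (α i) (β i)) (star (prodVec (α i) (β i))))).PosSemidef
  rw [map_sum]
  refine posSemidef_sum _ fun i _ => ?_
  rw [map_smul]
  exact (posSemidef_partialTranspose_vecMulVec_prodVec (α i) (β i)).smul
    (Complex.zero_le_real.mpr (hp i))
end

section
/- Let d ≥ 3 and n ≥ 1. Consider |ψ⟩ = Σ_{𝐢 ∈ {0,…,d−1}^n} a_𝐢 |Φ_{i₁}⟩ ⊗ ⋯ ⊗ |Φ_{i_n}⟩ in (ℂ^d ⊗ ℂ^d)^{⊗n} (viewed as ℂ^{d^n} ⊗ ℂ^{d^n} after regrouping tensor factors), where |Φ_k⟩ = (1/√d)Σ_j e^{2πijk/d}|jj⟩. If |ψ⟩ has Schmidt rank at most two across the A:B cut, a_{1,…,1} = 0, and a_𝐢 = 0 whenever 𝐢 is a permutation of (2,1,…,1), then |ψ⟩ = 0. -/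
open scoped BigOperators

/-- The "e-dit" eigenvector `|Φ_k⟩ = (1/√d) Σ_j e^{2πijk/d} |jj⟩`. -/
noncomputable def Phi (d : ℕ) (k : Fin d) : Fin d × Fin d → ℂ :=
  fun p => if p.1 = p.2 then
    (1 / Real.sqrt d : ℂ) *
      Complex.exp (2 * Real.pi * Complex.I * ((p.1 : ℕ) : ℂ) * ((k : ℕ) : ℂ) / d)
  else 0

/-- Geometric sum of a primitive root. -/
lemma sum_zpow_eq (d : ℕ) (hd : d ≠ 0) {ω : ℂ} (hω : IsPrimitiveRoot ω d) (m : ℤ) :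
    ∑ v : Fin d, ω ^ ((v : ℤ) * m) = if (d : ℤ) ∣ m then (d : ℂ) else 0 := by
  have hω0 : ω ≠ 0 := hω.ne_zero hd
  have hrw : ∀ v : Fin d, ω ^ ((v : ℤ) * m) = (ω ^ m) ^ (v : ℕ) := by
    intro v
    rw [mul_comm, zpow_mul, zpow_natCast]
  simp_rw [hrw]
  rw [Fin.sum_univ_eq_sum_range (fun k => (ω ^ m) ^ k) d]
  by_cases hdvd : (d : ℤ) ∣ m
  · have h1 : ω ^ m = 1 := (hω.zpow_eq_one_iff_dvd m).mpr hdvd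
    simp [h1, hdvd]
  · have h1 : ω ^ m ≠ 1 := fun h => hdvd ((hω.zpow_eq_one_iff_dvd m).mp h)
    rw [geom_sum_eq h1]
    have hpow : (ω ^ m) ^ d = 1 := by
      rw [← zpow_natCast (ω ^ m) d, ← zpow_mul, mul_comm, zpow_mul, zpow_natCast,
        hω.pow_eq_one, one_zpow]
    simp [hpow, hdvd]

lemma dvd_small_eq_zero {d : ℕ} {m : ℤ} (hdvd : (d : ℤ) ∣ m) (h1 : -(d:ℤ) < m)
    (h2 : m < d) : m = 0 := by
  rcases hdvd with ⟨k, rfl⟩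
  rcases lt_trichotomy k 0 with hk | hk | hk
  · nlinarith
  · simp [hk]
  · nlinarith

/-- Let `d ≥ 3`, `n ≥ 1` and
`|ψ⟩ = Σ_𝐢 a_𝐢 |Φ_{i₁}⟩ ⊗ ⋯ ⊗ |Φ_{i_n}⟩` in `(ℂ^d ⊗ ℂ^d)^{⊗n}`, regrouped as a
bipartite vector on `ℂ^{d^n} ⊗ ℂ^{d^n}`.  If `|ψ⟩` has Schmidt rank at most
two across the A:B cut, `a_{1,…,1} = 0`, and `a_𝐢 = 0` for every `𝐢` that is a
permutation of `(2,1,…,1)`, then `|ψ⟩ = 0`. -/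
theorem stmt_13 (d n : ℕ) (hd : 3 ≤ d) (hn : 1 ≤ n)
    (a : (Fin n → Fin d) → ℂ)
    (ψ : (Fin n → Fin d) × (Fin n → Fin d) → ℂ)
    (hψ : ψ = fun p => ∑ i : Fin n → Fin d,
        a i * ∏ t : Fin n, Phi d (i t) (p.1 t, p.2 t))
    (hrank : (Matrix.of fun x y : Fin n → Fin d => ψ (x, y)).rank ≤ 2)
    (h1 : a (fun _ => (⟨1, by omega⟩ : Fin d)) = 0)
    (h2 : ∀ j : Fin n,
        a (Function.update (fun _ => (⟨1, by omega⟩ : Fin d)) j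
            (⟨2, by omega⟩ : Fin d)) = 0) :
    ψ = 0 := by
  have hd0 : d ≠ 0 := by omega
  set ω : ℂ := Complex.exp (2 * Real.pi * Complex.I / d) with hωdef
  have hω : IsPrimitiveRoot ω d := Complex.isPrimitiveRoot_exp d hd0
  have hω0 : ω ≠ 0 := Complex.exp_ne_zero _
  set c : ℂ := (1 / Real.sqrt d : ℂ) with hcdef
  have hc0 : c ≠ 0 := by
    simp only [hcdef, one_div, ne_eq, inv_eq_zero, Complex.ofReal_eq_zero]
    exact Real.sqrt_ne_zero'.mpr (by positivity)
  set dot : (Fin n → Fin d) → (Fin n → Fin d) → ℕ :=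
    fun x i => ∑ t, (x t : ℕ) * (i t : ℕ) with hdotdef
  set F : (Fin n → Fin d) → ℂ := fun x => ∑ i, a i * ω ^ dot x i with hFdef
  -- Phi on the diagonal
  have hPhi : ∀ (k j : Fin d), Phi d k (j, j) = c * ω ^ ((j : ℕ) * (k : ℕ)) := by
    intro k j
    simp only [Phi, if_pos rfl]
    congr 1
    rw [hωdef, ← Complex.exp_nat_mul]
    congr 1
    push_cast
    rw [hcdef]; ring
  -- ψ is diagonal
  have hψ' : ∀ x y : Fin n → Fin d,
      ψ (x, y) = if x = y then c ^ n * F x else 0 := by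
    intro x y
    rw [hψ]
    by_cases hxy : x = y
    · subst hxy
      rw [if_pos rfl, hFdef]
      rw [Finset.mul_sum]
      refine Finset.sum_congr rfl fun i _ => ?_
      have hp : ∏ t : Fin n, Phi d (i t) (x t, x t) = c ^ n * ω ^ dot x i := by
        simp_rw [hPhi]
        rw [Finset.prod_mul_distrib, Finset.prod_const, Finset.card_univ,
          Fintype.card_fin, Finset.prod_pow_eq_pow_sum]
      rw [hp]; ring
    · rw [if_neg hxy]
      obtain ⟨t₀, ht₀⟩ := Function.ne_iff.mp hxy
      refine Finset.sum_eq_zero fun i _ => ?_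
      rw [Finset.prod_eq_zero (Finset.mem_univ t₀), mul_zero]
      simp [Phi, ht₀]
  -- rank bound gives support of F of size ≤ 2
  have hM : (Matrix.of fun x y : Fin n → Fin d => ψ (x, y)) =
      Matrix.diagonal (fun x => c ^ n * F x) := by
    ext x y
    simp only [Matrix.of_apply, Matrix.diagonal_apply, hψ' x y]
  rw [hM, Matrix.rank_diagonal] at hrank
  set S : Finset (Fin n → Fin d) := Finset.univ.filter (fun x => F x ≠ 0) with hSdef
  have hS : S.card ≤ 2 := by
    have hfilter : S = Finset.univ.filter (fun x => c ^ n * F x ≠ 0) := by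
      ext x
      simp only [hSdef, Finset.mem_filter, Finset.mem_univ, true_and]
      constructor
      · exact fun h => mul_ne_zero (pow_ne_zero _ hc0) h
      · intro h hF; exact h (by rw [hF, mul_zero])
    rw [hfilter, ← Fintype.card_subtype]
    exact hrank
  -- inversion formula
  have hinv : ∀ i : Fin n → Fin d,
      ∑ x : Fin n → Fin d, F x * (ω ^ dot x i)⁻¹ = (d : ℂ) ^ n * a i := by
    intro i
    simp only [hFdef, Finset.sum_mul]
    rw [Finset.sum_comm]
    have hterm : ∀ i' x : Fin n → Fin d,
        a i' * ω ^ dot x i' * (ω ^ dot x i)⁻¹ =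
        a i' * ∏ t, ω ^ ((x t : ℤ) * ((i' t : ℤ) - (i t : ℤ))) := by
      intro i' x
      rw [mul_assoc]
      congr 1
      rw [← Finset.prod_pow_eq_pow_sum, ← Finset.prod_pow_eq_pow_sum, ← Finset.prod_inv_distrib,
        ← Finset.prod_mul_distrib]
      refine Finset.prod_congr rfl fun t _ => ?_
      rw [← zpow_natCast ω ((x t : ℕ) * (i' t : ℕ)), ← zpow_natCast ω ((x t : ℕ) * (i t : ℕ)),
        ← zpow_neg, ← zpow_add₀ hω0]
      congr 1
      push_cast
      ring
    simp_rw [hterm]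
    have hswap : ∀ i' : Fin n → Fin d,
        ∑ x : Fin n → Fin d, ∏ t, ω ^ ((x t : ℤ) * ((i' t : ℤ) - (i t : ℤ))) =
        if i' = i then (d : ℂ) ^ n else 0 := by
      intro i'
      rw [← Fintype.prod_sum (fun (t : Fin n) (v : Fin d) => ω ^ (((v : ℕ) : ℤ) * (((i' t : ℕ) : ℤ) - ((i t : ℕ) : ℤ))))]
      by_cases hii : i' = i
      · subst hii
        simp only [sub_self, mul_zero, zpow_zero, Finset.sum_const, Finset.card_univ,
          Fintype.card_fin, nsmul_eq_mul, mul_one, Finset.prod_const, if_true]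
      · rw [if_neg hii]
        obtain ⟨t₀, ht₀⟩ := Function.ne_iff.mp hii
        refine Finset.prod_eq_zero (Finset.mem_univ t₀) ?_
        rw [sum_zpow_eq d hd0 hω]
        rw [if_neg]
        intro hdvd
        have := dvd_small_eq_zero hdvd
          (by have ha := (i t₀).isLt; have hb := (i' t₀).isLt; omega)
          (by have ha := (i t₀).isLt; have hb := (i' t₀).isLt; omega)
        exact ht₀ (Fin.ext (by omega))
    calc ∑ i' : Fin n → Fin d, ∑ x : Fin n → Fin d,
          a i' * ∏ t, ω ^ ((x t : ℤ) * ((i' t : ℤ) - (i t : ℤ)))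
        = ∑ i' : Fin n → Fin d, a i' * if i' = i then (d : ℂ) ^ n else 0 := by
          refine Finset.sum_congr rfl fun i' _ => ?_
          rw [← Finset.mul_sum, hswap i']
      _ = (d : ℂ) ^ n * a i := by
          simp [Finset.sum_ite_eq', mul_comm]
  -- restrict the sum to S
  have hinvS : ∀ i : Fin n → Fin d,
      ∑ x ∈ S, F x * (ω ^ dot x i)⁻¹ = (d : ℂ) ^ n * a i := by
    intro i
    rw [← hinv i]
    refine Finset.sum_subset (Finset.subset_univ S) ?_
    intro x _ hx
    simp only [hSdef, Finset.mem_filter, Finset.mem_univ, true_and, not_not] at hx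
    rw [hx, zero_mul]
  -- notation for the special indices
  set ones : Fin n → Fin d := fun _ => (⟨1, by omega⟩ : Fin d) with honesdef
  have hdot2 : ∀ (x : Fin n → Fin d) (j : Fin n),
      dot x (Function.update ones j (⟨2, by omega⟩ : Fin d)) = (x j : ℕ) + dot x ones := by
    intro x j
    simp only [hdotdef]
    have : ∀ t : Fin n, (x t : ℕ) * ((Function.update ones j (⟨2, by omega⟩ : Fin d)) t : ℕ)
        = (x t : ℕ) * ((ones t : ℕ)) + if t = j then (x t : ℕ) else 0 := by
      intro t
      by_cases ht : t = j
      · subst ht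
        rw [Function.update_self, if_pos rfl]
        simp only [honesdef]
        ring
      · rw [Function.update_of_ne ht, if_neg ht, add_zero]
    simp_rw [this]
    rw [Finset.sum_add_distrib]
    simp [add_comm]
  -- main claim: F vanishes everywhere
  have hF0 : ∀ x, F x = 0 := by
    intro x₀
    by_contra hx₀
    have hx₀S : x₀ ∈ S := by
      simp only [hSdef, Finset.mem_filter, Finset.mem_univ, true_and]; exact hx₀
    have h1' : a ones = 0 := h1
    have h2' : ∀ j : Fin n,
        a (Function.update ones j (⟨2, by omega⟩ : Fin d)) = 0 := h2
    -- case on the cardinality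
    have hcard : S.card = 1 ∨ S.card = 2 := by
      have : 1 ≤ S.card := Finset.card_pos.mpr ⟨x₀, hx₀S⟩
      omega
    have hinv_ne : ∀ m : ℕ, (ω ^ m)⁻¹ ≠ 0 := fun m => inv_ne_zero (pow_ne_zero _ hω0)
    rcases hcard with hcard | hcard
    · obtain ⟨b, hb⟩ := Finset.card_eq_one.mp hcard
      have hxb : x₀ = b := by
        have := hx₀S; rw [hb, Finset.mem_singleton] at this; exact this
      have e := hinvS ones
      rw [hb, Finset.sum_singleton, ← hxb, h1', mul_zero] at e
      exact hinv_ne _ ((mul_eq_zero.mp e).resolve_left hx₀)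
    · obtain ⟨u, v, huv, hSuv⟩ := Finset.card_eq_two.mp hcard
      have hx₀uv : x₀ = u ∨ x₀ = v := by
        have := hx₀S; rw [hSuv, Finset.mem_insert, Finset.mem_singleton] at this; exact this
      -- set y to the other element
      obtain ⟨y, hxy, hSxy⟩ : ∃ y, x₀ ≠ y ∧ S = {x₀, y} := by
        rcases hx₀uv with h | h
        · exact ⟨v, by rw [h]; exact huv, by rw [hSuv, h]⟩
        · exact ⟨u, by rw [h]; exact fun hh => huv hh.symm, by
            rw [hSuv, h, Finset.pair_comm]⟩
      obtain ⟨j, hj⟩ := Function.ne_iff.mp hxy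
      have hyF : F y ≠ 0 := by
        have : y ∈ S := by rw [hSxy]; exact Finset.mem_insert_of_mem (Finset.mem_singleton_self y)
        simpa [hSdef] using this
      have e1 := hinvS ones
      rw [hSxy, Finset.sum_pair hxy, h1', mul_zero] at e1
      have e2 := hinvS (Function.update ones j (⟨2, by omega⟩ : Fin d))
      rw [hSxy, Finset.sum_pair hxy, h2' j, mul_zero] at e2
      rw [hdot2 x₀ j, hdot2 y j] at e2
      rw [pow_add, pow_add, mul_inv, mul_inv] at e2
      -- now derive (ω ^ (x₀ j))⁻¹ = (ω ^ (y j))⁻¹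
      have key : F x₀ * (ω ^ dot x₀ ones)⁻¹ *
          ((ω ^ ((x₀ j : ℕ)))⁻¹ - (ω ^ ((y j : ℕ)))⁻¹) = 0 := by
        linear_combination e2 - (ω ^ ((y j : ℕ)))⁻¹ * e1
      have hu0 : F x₀ * (ω ^ dot x₀ ones)⁻¹ ≠ 0 := mul_ne_zero hx₀ (hinv_ne _)
      have hωeq : (ω ^ ((x₀ j : ℕ)))⁻¹ = (ω ^ ((y j : ℕ)))⁻¹ := by
        have := (mul_eq_zero.mp key).resolve_left hu0
        exact sub_eq_zero.mp this
      have : ((x₀ j : ℕ)) = ((y j : ℕ)) :=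
        hω.pow_inj (x₀ j).isLt (y j).isLt (inv_injective hωeq)
      exact hj (Fin.ext this)
  -- conclude
  funext p
  have := hψ' p.1 p.2
  simp only [Prod.mk.eta] at this
  rw [Pi.zero_apply, this]
  by_cases h : p.1 = p.2
  · rw [if_pos h, hF0, mul_zero]
  · rw [if_neg h]
end

section
/- If ã: {0,…,d−1}^n → ℂ is supported on at most two points 𝐱 ≠ 𝐲, and its inverse discrete Fourier transform a_𝐢 = d^{−n/2}(α e^{−2πi𝐢·𝐱/d} + β e^{−2πi𝐢·𝐲/d}) (with α, β ≠ 0) vanishes at 𝐢 = (1,…,1) and at every permutation of (2,1,…,1), then 𝐱 = 𝐲, a contradiction. Hence no such doubly-supported ã exists with these vanishing constraints. -/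
/-!
Write `ω = exp(-2πi/d)`, a primitive `d`-th root of unity, so that
`a_𝐢 ∝ α ω^{𝐢·𝐱} + β ω^{𝐢·𝐲}`. Raising the `j`-th entry of `𝐢 = (1,…,1)` from `1` to `2`
multiplies the two terms by `ω^{x_j}` and `ω^{y_j}`; since both values of `a` vanish and
`β ≠ 0`, this forces `ω^{x_j} = ω^{y_j}`, hence `x_j = y_j` because `0 ≤ x_j, y_j < d`.
-/

open Complex
open scoped Real

theorem sum_update_one_two_mul {ι R : Type*} [Fintype ι] [DecidableEq ι] [Semiring R]
    (j : ι) (z : ι → R) :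
    ∑ t, Function.update (fun _ => (1 : R)) j 2 t * z t = ∑ t, z t + z j := by
  have hsplit : ∀ t, Function.update (fun _ => (1 : R)) j 2 t * z t
      = z t + if t = j then z t else 0 := by
    intro t
    rcases eq_or_ne t j with rfl | ht
    · simp [two_mul]
    · simp [ht]
  simp [hsplit, Finset.sum_add_distrib]

theorem exp_neg_two_pi_I_mul_natCast_div (d s : ℕ) :
    exp (-(2 * π * I * s / d)) = (exp (2 * π * I / d))⁻¹ ^ s := by
  rw [← exp_neg, ← exp_nat_mul]
  ring_nf

theorem eq_of_add_eq_zero_of_add_mul_eq_zero {K : Type*} [CommRing K] [IsDomain K]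
    {α β A B u v : K} (hβ : β ≠ 0) (hB : B ≠ 0)
    (h₁ : α * A + β * B = 0) (h₂ : α * (A * u) + β * (B * v) = 0) : u = v := by
  have h : β * B * (v - u) = 0 := by linear_combination h₂ - u * h₁
  simpa [hβ, hB, sub_eq_zero, eq_comm] using h

/-- If `a_𝐢 = d^{−n/2}(α e^{−2πi𝐢·𝐱/d} + β e^{−2πi𝐢·𝐲/d})`
(the inverse Fourier transform of a function supported on the two points
`𝐱 ≠ 𝐲`, with `α, β ≠ 0`) vanishes at `𝐢 = (1,…,1)` and at every permutation
of `(2,1,…,1)`, we reach a contradiction (since the constraints force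
`𝐱 = 𝐲`). -/
theorem stmt_14 (d n : ℕ) (hd : 3 ≤ d)
    (x y : Fin n → Fin d) (hxy : x ≠ y)
    (α β : ℂ) (hβ : β ≠ 0)
    (a : (Fin n → Fin d) → ℂ)
    (ha : a = fun i => (1 / Real.sqrt (d ^ n) : ℂ) *
        (α * Complex.exp (-(2 * Real.pi * Complex.I *
            ((∑ t : Fin n, ((i t : ℕ) * (x t : ℕ) : ℕ) : ℕ) : ℂ) / d))
          + β * Complex.exp (-(2 * Real.pi * Complex.I *
            ((∑ t : Fin n, ((i t : ℕ) * (y t : ℕ) : ℕ) : ℕ) : ℂ) / d))))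
    (h1 : a (fun _ => (⟨1, by omega⟩ : Fin d)) = 0)
    (h2 : ∀ j : Fin n,
        a (Function.update (fun _ => (⟨1, by omega⟩ : Fin d)) j
            (⟨2, by omega⟩ : Fin d)) = 0) :
    False := by
  have hc : (1 / Real.sqrt (d ^ n) : ℂ) ≠ 0 := by
    have : 0 < Real.sqrt (d ^ n) := Real.sqrt_pos.2 (by positivity)
    simpa using this.ne'
  have hval : ∀ j t : Fin n,
      (Function.update (fun _ => (⟨1, by omega⟩ : Fin d)) j ⟨2, by omega⟩ t : ℕ)
        = Function.update (fun _ => 1) j 2 t :=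
    fun j t => Function.apply_update (fun _ => Fin.val) _ j _ t
  subst ha
  simp only [exp_neg_two_pi_I_mul_natCast_div, mul_eq_zero, hc, false_or, one_mul, hval,
    sum_update_one_two_mul, pow_add] at h1 h2
  set ω := (exp (2 * π * I / d))⁻¹
  have hω : IsPrimitiveRoot ω d := (isPrimitiveRoot_exp d (by omega)).inv
  refine hxy (funext fun j => Fin.ext (hω.pow_inj (x j).isLt (y j).isLt ?_))
  exact eq_of_add_eq_zero_of_add_mul_eq_zero hβ (pow_ne_zero _ (hω.ne_zero (by omega))) h1 (h2 j)
end

section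
/- A positive linear map Λ: M_n(ℂ) → M_m(ℂ) is k-positive if and only if (1_n ⊗ Λ)(|ψ⟩⟨ψ|) ≥ 0 for all vectors |ψ⟩ ∈ ℂ^n ⊗ ℂ^n of Schmidt rank at most k. -/
open scoped BigOperators ComplexOrder

/-- The ampliation `1_k ⊗ Λ` of a linear map `Λ : M_n(ℂ) → M_m(ℂ)`, acting on
matrices on `ℂ^k ⊗ ℂ^n` blockwise. -/
def amp (k n m : ℕ)
    (Λ' : Matrix (Fin n) (Fin n) ℂ →ₗ[ℂ] Matrix (Fin m) (Fin m) ℂ)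
    (M : Matrix (Fin k × Fin n) (Fin k × Fin n) ℂ) :
    Matrix (Fin k × Fin m) (Fin k × Fin m) ℂ :=
  Matrix.of fun p q => Λ' (Matrix.of fun r s => M (p.1, r) (q.1, s)) p.2 q.2

/-!
Both directions rest on the covariance
`(1 ⊗ Λ)((A ⊗ 1) M (A ⊗ 1)ᴴ) = (A ⊗ 1) (1 ⊗ Λ)(M) (A ⊗ 1)ᴴ` for rectangular `A`.
A vector of Schmidt rank at most `k` in `ℂ^n ⊗ ℂ^n` is `(U ⊗ 1) w` with `w ∈ ℂ^k ⊗ ℂ^n`,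
which gives the forward direction. Conversely, a positive semidefinite `M` on `ℂ^k ⊗ ℂ^n`
is a sum of projectors `|ψ⟩⟨ψ|`, and every `ψ ∈ ℂ^k ⊗ ℂ^n` is `(d ⊗ 1) χ` with
`χ ∈ ℂ^n ⊗ ℂ^n` of Schmidt rank at most `k`: for `k ≤ n` embed `ψ` by an isometry, for
`n < k` take `χ` maximally entangled and `d` the coefficient matrix of `ψ`.
-/

open Matrix
open scoped Kronecker

section Kronecker

variable {R ι κ μ : Type*} [CommSemiring R] [Fintype κ] [Fintype μ] [DecidableEq μ]

lemma kronecker_one_mulVec_apply (A : Matrix ι κ R) (v : κ × μ → R) (a : ι) (p : μ) :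
    ((A ⊗ₖ (1 : Matrix μ μ R)) *ᵥ v) (a, p) = ∑ t, A a t * v (t, p) := by
  simp [mulVec, dotProduct, Fintype.sum_prod_type, one_apply]

lemma kronecker_one_mul_apply {ν : Type*} (A : Matrix ι κ R) (M : Matrix (κ × μ) ν R)
    (a : ι) (p : μ) (c : ν) :
    ((A ⊗ₖ (1 : Matrix μ μ R)) * M) (a, p) c = ∑ t, A a t * M (t, p) c := by
  simp [mul_apply, Fintype.sum_prod_type, one_apply]

variable [StarRing R]

lemma mul_conjTranspose_kronecker_one_apply {ν : Type*} (A : Matrix ι κ R)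
    (M : Matrix ν (κ × μ) R) (c : ν) (b : ι) (q : μ) :
    (M * (A ⊗ₖ (1 : Matrix μ μ R))ᴴ) c (b, q) = ∑ u, M c (u, q) * star (A b u) := by
  simp [mul_apply, Fintype.sum_prod_type, one_apply, apply_ite star]

lemma kronecker_one_mul_mul_conjTranspose_apply (A : Matrix ι κ R)
    (M : Matrix (κ × μ) (κ × μ) R) (a b : ι) (p q : μ) :
    ((A ⊗ₖ (1 : Matrix μ μ R)) * M * (A ⊗ₖ (1 : Matrix μ μ R))ᴴ) (a, p) (b, q) =
      ∑ t, ∑ u, A a t * star (A b u) * M (t, p) (u, q) := by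
  simp only [mul_conjTranspose_kronecker_one_apply, kronecker_one_mul_apply, Finset.sum_mul]
  rw [Finset.sum_comm]
  exact Finset.sum_congr rfl fun t _ => Finset.sum_congr rfl fun u _ => by ring

lemma vecMulVec_mulVec_star (X : Matrix ι κ R) (v : κ → R) :
    vecMulVec (X *ᵥ v) (star (X *ᵥ v)) = X * vecMulVec v (star v) * Xᴴ := by
  rw [star_mulVec, ← mul_vecMulVec, ← vecMulVec_mul, Matrix.mul_assoc]

end Kronecker

lemma one_submatrix_castLE_mul_transpose {R : Type*} [CommSemiring R] {n k : ℕ} (h : n ≤ k) :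
    (1 : Matrix (Fin k) (Fin k) R).submatrix (Fin.castLE h) id *
      ((1 : Matrix (Fin k) (Fin k) R).submatrix (Fin.castLE h) id)ᵀ = 1 := by
  rw [transpose_submatrix, transpose_one, ← submatrix_mul _ _ _ _ _ Function.bijective_id,
    Matrix.mul_one, submatrix_one _ (Fin.castLE_injective h)]

section Ampliation

variable {n m : ℕ} (Λ : Matrix (Fin n) (Fin n) ℂ →ₗ[ℂ] Matrix (Fin m) (Fin m) ℂ)

lemma amp_sum {k : ℕ} {ι : Type*} (s : Finset ι)
    (M : ι → Matrix (Fin k × Fin n) (Fin k × Fin n) ℂ) :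
    amp k n m Λ (∑ i ∈ s, M i) = ∑ i ∈ s, amp k n m Λ (M i) := by
  ext p q
  have hblock : (of fun r s' => ∑ i ∈ s, M i (p.1, r) (q.1, s') : Matrix (Fin n) (Fin n) ℂ) =
      ∑ i ∈ s, of fun r s' => M i (p.1, r) (q.1, s') := by
    ext r s'
    simp [Matrix.sum_apply]
  simp only [amp, of_apply, Matrix.sum_apply]
  rw [hblock, map_sum, Matrix.sum_apply]

lemma amp_kronecker_one_mul_mul_conjTranspose {k₁ k₂ : ℕ} (A : Matrix (Fin k₁) (Fin k₂) ℂ)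
    (M : Matrix (Fin k₂ × Fin n) (Fin k₂ × Fin n) ℂ) :
    amp k₁ n m Λ ((A ⊗ₖ (1 : Matrix (Fin n) (Fin n) ℂ)) * M *
        (A ⊗ₖ (1 : Matrix (Fin n) (Fin n) ℂ))ᴴ) =
      (A ⊗ₖ (1 : Matrix (Fin m) (Fin m) ℂ)) * amp k₂ n m Λ M *
        (A ⊗ₖ (1 : Matrix (Fin m) (Fin m) ℂ))ᴴ := by
  ext ⟨a, p⟩ ⟨b, q⟩
  have hblock : (of fun r s => ((A ⊗ₖ (1 : Matrix (Fin n) (Fin n) ℂ)) * M *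
        (A ⊗ₖ (1 : Matrix (Fin n) (Fin n) ℂ))ᴴ) (a, r) (b, s) : Matrix (Fin n) (Fin n) ℂ) =
      ∑ t, ∑ u, (A a t * star (A b u)) • of fun r s => M (t, r) (u, s) := by
    ext r s
    simp only [of_apply, kronecker_one_mul_mul_conjTranspose_apply, Matrix.sum_apply,
      Matrix.smul_apply, smul_eq_mul]
  rw [kronecker_one_mul_mul_conjTranspose_apply]
  simp only [amp, of_apply, hblock, map_sum, map_smul, Matrix.sum_apply, Matrix.smul_apply,
    smul_eq_mul]

lemma posSemidef_amp_vecMulVec_kronecker_one_mulVec {k₁ k₂ : ℕ}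
    (A : Matrix (Fin k₁) (Fin k₂) ℂ) (χ : Fin k₂ × Fin n → ℂ)
    (hχ : (amp k₂ n m Λ (vecMulVec χ (star χ))).PosSemidef) :
    (amp k₁ n m Λ (vecMulVec ((A ⊗ₖ (1 : Matrix (Fin n) (Fin n) ℂ)) *ᵥ χ)
      (star ((A ⊗ₖ (1 : Matrix (Fin n) (Fin n) ℂ)) *ᵥ χ)))).PosSemidef := by
  rw [vecMulVec_mulVec_star, amp_kronecker_one_mul_mul_conjTranspose]
  exact hχ.mul_mul_conjTranspose_same _

end Ampliation

section SchmidtRank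

variable {R : Type*} [CommSemiring R]

def SchmidtRankLE {α β : Type*} (k : ℕ) (ψ : α × β → R) : Prop :=
  ∃ u : Fin k → α → R, ∃ w : Fin k → β → R, ψ = fun p => ∑ t, u t p.1 * w t p.2

lemma schmidtRankLE_iff_exists_kronecker_one_mulVec {α β : Type*} [Fintype β] [DecidableEq β]
    (k : ℕ) (ψ : α × β → R) :
    SchmidtRankLE k ψ ↔
      ∃ (U : Matrix α (Fin k) R) (w : Fin k × β → R), ψ = (U ⊗ₖ (1 : Matrix β β R)) *ᵥ w := by
  constructor
  · rintro ⟨u, w, rfl⟩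
    refine ⟨of fun i t => u t i, fun p => w p.1 p.2, ?_⟩
    ext ⟨i, s⟩
    simp [kronecker_one_mulVec_apply]
  · rintro ⟨U, w, rfl⟩
    refine ⟨fun t i => U i t, fun t s => w (t, s), ?_⟩
    ext ⟨i, s⟩
    simp [kronecker_one_mulVec_apply]

lemma exists_kronecker_one_mulVec_schmidtRankLE {k n : ℕ} (ψ : Fin k × Fin n → R) :
    ∃ (d : Matrix (Fin k) (Fin n) R) (χ : Fin n × Fin n → R),
      SchmidtRankLE k χ ∧ ψ = (d ⊗ₖ (1 : Matrix (Fin n) (Fin n) R)) *ᵥ χ := by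
  rcases le_or_gt k n with hkn | hnk
  · set E := (1 : Matrix (Fin n) (Fin n) R).submatrix (Fin.castLE hkn) id
    refine ⟨E, (Eᵀ ⊗ₖ (1 : Matrix (Fin n) (Fin n) R)) *ᵥ ψ,
      (schmidtRankLE_iff_exists_kronecker_one_mulVec k _).2 ⟨Eᵀ, ψ, rfl⟩, ?_⟩
    rw [mulVec_mulVec, ← mul_kronecker_mul, one_submatrix_castLE_mul_transpose, Matrix.mul_one,
      one_kronecker_one, one_mulVec]
  · set E := (1 : Matrix (Fin k) (Fin k) R).submatrix (Fin.castLE hnk.le) id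
    refine ⟨of fun a i => ψ (a, i), fun p => (1 : Matrix (Fin n) (Fin n) R) p.1 p.2,
      (schmidtRankLE_iff_exists_kronecker_one_mulVec k _).2 ⟨E, fun p => E p.2 p.1, ?_⟩, ?_⟩
    · ext ⟨i, s⟩
      rw [kronecker_one_mulVec_apply, ← one_submatrix_castLE_mul_transpose hnk.le (R := R),
        mul_apply]
      rfl
    · ext ⟨a, s⟩
      simp [kronecker_one_mulVec_apply, one_apply]

end SchmidtRank

theorem stmt_15_general (n m k : ℕ)
    (Λ' : Matrix (Fin n) (Fin n) ℂ →ₗ[ℂ] Matrix (Fin m) (Fin m) ℂ) :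
    (∀ M : Matrix (Fin k × Fin n) (Fin k × Fin n) ℂ,
        M.PosSemidef → (amp k n m Λ' M).PosSemidef)
    ↔ (∀ ψ : Fin n × Fin n → ℂ,
        (∃ u w : Fin k → Fin n → ℂ,
            ψ = fun p => ∑ t : Fin k, u t p.1 * w t p.2) →
        (amp n n m Λ' (Matrix.of fun x y => ψ x * star (ψ y))).PosSemidef) := by
  constructor
  · intro hk ψ hψ
    obtain ⟨U, w, rfl⟩ := (schmidtRankLE_iff_exists_kronecker_one_mulVec k ψ).1 hψ
    exact posSemidef_amp_vecMulVec_kronecker_one_mulVec Λ' U w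
      (hk _ (posSemidef_vecMulVec_self_star w))
  · intro h M hM
    obtain ⟨r, v, rfl⟩ := posSemidef_iff_eq_sum_vecMulVec.1 hM
    rw [amp_sum]
    refine posSemidef_sum _ fun i _ => ?_
    obtain ⟨d, χ, hχ, hv⟩ := exists_kronecker_one_mulVec_schmidtRankLE (v i)
    rw [hv]
    exact posSemidef_amp_vecMulVec_kronecker_one_mulVec Λ' d χ (h χ hχ)

/-- A positive linear map `Λ : M_n(ℂ) → M_m(ℂ)` is `k`-positive
iff `(1_n ⊗ Λ)(|ψ⟩⟨ψ|) ≥ 0` for all vectors `ψ ∈ ℂ^n ⊗ ℂ^n` of Schmidt rank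
at most `k` (i.e. sums of `k` product vectors). -/
theorem stmt_15 (n m k : ℕ)
    (Λ' : Matrix (Fin n) (Fin n) ℂ →ₗ[ℂ] Matrix (Fin m) (Fin m) ℂ)
    (hpos : ∀ X : Matrix (Fin n) (Fin n) ℂ, X.PosSemidef → (Λ' X).PosSemidef) :
    (∀ M : Matrix (Fin k × Fin n) (Fin k × Fin n) ℂ,
        M.PosSemidef → (amp k n m Λ' M).PosSemidef)
    ↔ (∀ ψ : Fin n × Fin n → ℂ,
        (∃ u w : Fin k → Fin n → ℂ,
            ψ = fun p => ∑ t : Fin k, u t p.1 * w t p.2) →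
        (amp n n m Λ' (Matrix.of fun x y => ψ x * star (ψ y))).PosSemidef) :=
  stmt_15_general n m k Λ'
end

section
/- The Werner map τ_W(X) = dλ·Tr(X)·1 − (λ+1)X on M_d(ℂ), for d ≥ 3 and λ ≥ 0, is positive (maps positive semidefinite matrices to positive semidefinite matrices) if and only if λ ≥ 1/(d−1); moreover, for λ ≥ 2/(d−2), the operator (1₂ ⊗ τ_W)(|Ψ⟩⟨Ψ|) is positive semidefinite for every maximally entangled |Ψ⟩ ∈ ℂ² ⊗ ℂ^d of Schmidt rank two, i.e., τ_W is 2-positive. -/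
open scoped BigOperators ComplexOrder

open scoped Matrix

section WernerHelpers

private lemma conj_mul_self' (z : ℂ) : (starRingEnd ℂ) z * z = ((‖z‖ ^ 2 : ℝ) : ℂ) := by
  rw [mul_comm, Complex.mul_conj]; norm_cast; rw [Complex.sq_norm]

private lemma sum_conj_mul_self' {n : Type*} [Fintype n] (u : n → ℂ) :
    ∑ i, (starRingEnd ℂ) (u i) * u i = ((∑ i, ‖u i‖ ^ 2 : ℝ) : ℂ) := by
  rw [Complex.ofReal_sum]; exact Finset.sum_congr rfl fun i _ => conj_mul_self' (u i)

private lemma sum_mul_star_self' {n : Type*} [Fintype n] (u : n → ℂ) :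
    ∑ i, u i * star (u i) = ((∑ i, ‖u i‖ ^ 2 : ℝ) : ℂ) := by
  rw [← sum_conj_mul_self' u]
  exact Finset.sum_congr rfl fun i _ => by rw [mul_comm]; rfl

private lemma cs_abs' {n : Type*} [Fintype n] (f g : n → ℂ) :
    ‖∑ i, f i * g i‖ ^ 2
      ≤ (∑ i, ‖f i‖ ^ 2) * (∑ i, ‖g i‖ ^ 2) := by
  calc ‖∑ i, f i * g i‖ ^ 2
      ≤ (∑ i, ‖f i‖ * ‖g i‖) ^ 2 := by
        have h1 : ‖∑ i, f i * g i‖ ≤ ∑ i, ‖f i‖ * ‖g i‖ := by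
          refine (norm_sum_le _ _).trans_eq ?_
          exact Finset.sum_congr rfl fun i _ => norm_mul _ _
        exact pow_le_pow_left₀ (norm_nonneg _) h1 2
    _ ≤ _ := Finset.sum_mul_sq_le_sq_mul_sq _ _ _

private lemma trace_rep' {n : Type*} [Fintype n] (B : Matrix n n ℂ) :
    (Bᴴ * B).trace = ((∑ i, ∑ j, ‖B i j‖ ^ 2 : ℝ) : ℂ) := by
  simp only [Matrix.trace, Matrix.diag, Matrix.mul_apply, Matrix.conjTranspose_apply]
  rw [Finset.sum_comm, Complex.ofReal_sum]
  refine Finset.sum_congr rfl fun i _ => ?_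
  rw [Complex.ofReal_sum]
  exact Finset.sum_congr rfl fun j _ => conj_mul_self' (B i j)

private lemma qf_rep' {n : Type*} [Fintype n] (B : Matrix n n ℂ) (w : n → ℂ) :
    dotProduct (star w) (Matrix.mulVec (Bᴴ * B) w)
      = ((∑ i, ‖(Matrix.mulVec B w) i‖ ^ 2 : ℝ) : ℂ) := by
  rw [← Matrix.mulVec_mulVec, Matrix.dotProduct_mulVec, ← Matrix.star_mulVec]
  simpa [dotProduct, Pi.star_apply, RCLike.star_def] using
    sum_conj_mul_self' (Matrix.mulVec B w)

private lemma qf_bound' {n : Type*} [Fintype n] (B : Matrix n n ℂ) (w : n → ℂ) :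
    ∑ i, ‖(Matrix.mulVec B w) i‖ ^ 2
      ≤ (∑ i, ∑ j, ‖B i j‖ ^ 2) * ∑ j, ‖w j‖ ^ 2 := by
  rw [Finset.sum_mul]
  refine Finset.sum_le_sum fun i _ => ?_
  simpa [Matrix.mulVec, dotProduct] using cs_abs' (fun j => B i j) w

private lemma rank_one_bound' {m : Type*} [Fintype m] [DecidableEq m] (v : m → ℂ) (α β : ℝ)
    (hβ : 0 ≤ β) (h : β * ∑ i, ‖v i‖ ^ 2 ≤ α) :
    (Matrix.of fun p q : m =>
      (α : ℂ) * (if p = q then 1 else 0) - (β : ℂ) * (v p * star (v q))).PosSemidef := by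
  refine Matrix.PosSemidef.of_dotProduct_mulVec_nonneg ?_ ?_
  · ext p q
    simp only [Matrix.conjTranspose_apply, Matrix.of_apply]
    by_cases hpq : p = q
    · subst hpq
      simp [star_sub, star_mul, star_star, RCLike.star_def, Complex.conj_ofReal]
      ring
    · simp [hpq, Ne.symm hpq, star_sub, star_mul, star_star, RCLike.star_def,
        Complex.conj_ofReal]
      ring
  · intro w
    have hrow : ∀ p, (∑ q, ((α:ℂ) * (if p = q then 1 else 0) - (β:ℂ) * (v p * star (v q))) * w q)
        = (α:ℂ) * w p - (β:ℂ) * v p * ∑ q, star (v q) * w q := by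
      intro p
      simp only [sub_mul]
      rw [Finset.sum_sub_distrib]
      congr 1
      · simp [ite_mul, mul_assoc]
      · rw [Finset.mul_sum]
        refine Finset.sum_congr rfl fun q _ => by ring
    set t : ℂ := ∑ q, star (v q) * w q with ht
    have key : dotProduct (star w) (Matrix.mulVec (Matrix.of fun p q : m =>
        (α : ℂ) * (if p = q then 1 else 0) - (β : ℂ) * (v p * star (v q))) w)
        = (α:ℂ) * (∑ p, (starRingEnd ℂ) (w p) * w p) - (β:ℂ) * ((starRingEnd ℂ) t * t) := by
      simp only [dotProduct, Matrix.mulVec, Matrix.of_apply, Pi.star_apply]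
      calc ∑ p, star (w p) * ∑ q, ((α:ℂ) * (if p = q then 1 else 0)
              - (β:ℂ) * (v p * star (v q))) * w q
          = ∑ p, ((α:ℂ) * ((starRingEnd ℂ) (w p) * w p)
              - (β:ℂ) * (((starRingEnd ℂ) (w p)) * v p) * t) := by
            refine Finset.sum_congr rfl fun p _ => ?_
            rw [hrow p]
            simp only [RCLike.star_def]
            ring
        _ = (α:ℂ) * (∑ p, (starRingEnd ℂ) (w p) * w p)
              - (β:ℂ) * ((∑ p, (starRingEnd ℂ) (w p) * v p) * t) := by
            rw [Finset.sum_sub_distrib]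
            congr 1
            · exact (Finset.mul_sum _ _ _).symm
            · rw [← Finset.sum_mul, ← Finset.mul_sum, mul_assoc]
        _ = _ := by
            have hconj : (starRingEnd ℂ) t = ∑ p, (starRingEnd ℂ) (w p) * v p := by
              rw [ht, map_sum]
              refine Finset.sum_congr rfl fun p _ => ?_
              simp only [map_mul, RCLike.star_def, Complex.conj_conj]
              ring
            rw [hconj]
    rw [key, sum_conj_mul_self', conj_mul_self']
    have hcs : ‖t‖ ^ 2 ≤ (∑ i, ‖v i‖ ^ 2) * ∑ p, ‖w p‖ ^ 2 := by
      have := cs_abs' (fun q => star (v q)) w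
      simpa [ht, Complex.norm_conj, RCLike.star_def] using this
    have hreal : 0 ≤ α * (∑ p, ‖w p‖ ^ 2) - β * (‖t‖ ^ 2) := by
      have hw : 0 ≤ ∑ p, ‖w p‖ ^ 2 :=
        Finset.sum_nonneg fun _ _ => sq_nonneg _
      nlinarith [mul_le_mul_of_nonneg_left hcs hβ, mul_le_mul_of_nonneg_right h hw]
    calc (0:ℂ) = ((0:ℝ):ℂ) := by norm_cast
      _ ≤ ((α * (∑ p, ‖w p‖ ^ 2) - β * (‖t‖ ^ 2) : ℝ) : ℂ) := by
          exact_mod_cast hreal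
      _ = _ := by push_cast; ring

end WernerHelpers

/-- The Werner map `τ_W(X) = dλ·Tr(X)·1 − (λ+1)X` on `M_d(ℂ)`
(`d ≥ 3`, `λ ≥ 0`) is positive iff `λ ≥ 1/(d−1)`; and for `λ ≥ 2/(d−2)` the
operator `(1₂ ⊗ τ_W)(|Ψ⟩⟨Ψ|)` is positive semidefinite for every maximally
entangled Schmidt-rank-two `|Ψ⟩ = (|0,β₀⟩+|1,β₁⟩)/√2 ∈ ℂ² ⊗ ℂ^d` with
`⟨β₀|β₁⟩ = 0`, i.e. `τ_W` is 2-positive. -/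
theorem stmt_19 (d : ℕ) (hd : 3 ≤ d) (lam : ℝ) (hlam0 : 0 ≤ lam)
    (τ : Matrix (Fin d) (Fin d) ℂ → Matrix (Fin d) (Fin d) ℂ)
    (hτ : ∀ X : Matrix (Fin d) (Fin d) ℂ,
      τ X = ((d : ℂ) * (lam : ℂ) * X.trace) • (1 : Matrix (Fin d) (Fin d) ℂ)
        - ((lam : ℂ) + 1) • X) :
    ((∀ X : Matrix (Fin d) (Fin d) ℂ, X.PosSemidef → (τ X).PosSemidef)
        ↔ 1 / ((d : ℝ) - 1) ≤ lam) ∧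
    (2 / ((d : ℝ) - 2) ≤ lam →
      ∀ β₀ β₁ : Fin d → ℂ,
        (∑ i, ‖β₀ i‖ ^ 2 = 1) →
        (∑ i, ‖β₁ i‖ ^ 2 = 1) →
        (∑ i, star (β₀ i) * β₁ i = 0) →
        ∀ Ψ : Fin 2 × Fin d → ℂ,
          (Ψ = fun p => (1 / Real.sqrt 2 : ℂ) *
              (if p.1 = 0 then β₀ p.2 else β₁ p.2)) →
          (Matrix.of fun p q : Fin 2 × Fin d =>
              τ (Matrix.of fun x y : Fin d =>
                  Ψ (p.1, x) * star (Ψ (q.1, y))) p.2 q.2).PosSemidef) := by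
  haveI : NeZero d := ⟨by omega⟩
  have hd3 : (3:ℝ) ≤ (d:ℝ) := by exact_mod_cast hd
  constructor
  · constructor
    · -- positivity implies the eigenvalue bound
      intro hpos
      set X : Matrix (Fin d) (Fin d) ℂ :=
        Matrix.diagonal (fun i => if i = (0 : Fin d) then (1:ℂ) else 0) with hX
      have hXpsd : X.PosSemidef := by
        refine Matrix.posSemidef_diagonal_iff.mpr fun i => ?_
        split
        · exact zero_le_one
        · exact le_refl 0
      have h00 : (0:ℂ) ≤ (τ X) 0 0 := by
        simpa [dotProduct, Matrix.mulVec, Pi.star_apply, Pi.single_apply,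
          apply_ite] using (hpos X hXpsd).dotProduct_mulVec_nonneg (Pi.single (0 : Fin d) 1)
      have htrX : X.trace = 1 := by
        simp [hX, Matrix.trace_diagonal]
      rw [hτ] at h00
      have hval : (τ X) 0 0 = ((d * lam - lam - 1 : ℝ) : ℂ) := by
        rw [hτ]
        simp [hX, Matrix.sub_apply, Matrix.smul_apply, Matrix.one_apply, htrX,
          Matrix.diagonal_apply, smul_eq_mul]
        push_cast
        ring
      rw [hτ] at hval
      rw [hval] at h00
      have hr : (0:ℝ) ≤ d * lam - lam - 1 := by exact_mod_cast h00
      rw [div_le_iff₀ (by linarith : (0:ℝ) < (d:ℝ) - 1)]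
      nlinarith
    · -- eigenvalue bound implies positivity
      intro hl X hX
      obtain ⟨B, rfl⟩ : ∃ B : Matrix (Fin d) (Fin d) ℂ, X = Bᴴ * B := by
        open scoped MatrixOrder Matrix.Norms.L2Operator in
        exact CStarAlgebra.nonneg_iff_eq_star_mul_self.mp hX.nonneg
      have hl' : 1 ≤ lam * ((d:ℝ) - 1) := by
        rw [div_le_iff₀ (by linarith : (0:ℝ) < (d:ℝ) - 1)] at hl
        linarith [hl]
      set T : ℝ := ∑ i, ∑ j, ‖B i j‖ ^ 2 with hT
      have hT0 : 0 ≤ T :=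
        Finset.sum_nonneg fun _ _ => Finset.sum_nonneg fun _ _ => sq_nonneg _
      have htr : (Bᴴ * B).trace = (T : ℂ) := trace_rep' B
      refine Matrix.PosSemidef.of_dotProduct_mulVec_nonneg ?_ ?_
      · -- Hermitian
        rw [hτ, htr]
        show _ᴴ = _
        rw [Matrix.conjTranspose_sub, Matrix.conjTranspose_smul, Matrix.conjTranspose_smul,
          Matrix.conjTranspose_one, hX.1]
        congr 1 <;> congr 1 <;> simp [star_mul', Complex.conj_ofReal]
      · intro w
        set S : ℝ := ∑ j, ‖w j‖ ^ 2 with hS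
        have hS0 : 0 ≤ S := Finset.sum_nonneg fun _ _ => sq_nonneg _
        set Q : ℝ := ∑ i, ‖(Matrix.mulVec B w) i‖ ^ 2 with hQ
        have hQ0 : 0 ≤ Q := Finset.sum_nonneg fun _ _ => sq_nonneg _
        have hQTS : Q ≤ T * S := qf_bound' B w
        have expand : dotProduct (star w) (Matrix.mulVec (τ (Bᴴ * B)) w)
            = ((d * lam * T * S - (lam + 1) * Q : ℝ) : ℂ) := by
          rw [hτ, htr, Matrix.sub_mulVec, Matrix.smul_mulVec, Matrix.smul_mulVec,
            Matrix.one_mulVec, dotProduct_sub, dotProduct_smul,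
            dotProduct_smul, qf_rep']
          have hw : dotProduct (star w) w = ((S : ℝ) : ℂ) := by
            have := sum_conj_mul_self' w
            simp only [dotProduct, Pi.star_apply, RCLike.star_def]
            rw [this, hS]
          rw [hw, ← hQ]
          simp only [smul_eq_mul]
          push_cast
          ring
        rw [expand]
        have hr : (0:ℝ) ≤ d * lam * T * S - (lam + 1) * Q := by
          nlinarith [mul_le_mul_of_nonneg_left hQTS (by linarith : (0:ℝ) ≤ lam + 1),
            mul_nonneg hT0 hS0]
        exact_mod_cast hr
  · -- 2-positivity part
    intro hl2 β₀ β₁ hb0 hb1 horth Ψ hΨ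
    set c : ℂ := (1 / Real.sqrt 2 : ℂ) with hc
    have hΨ' : ∀ a : Fin 2, ∀ x : Fin d, Ψ (a, x) = c * (if a = 0 then β₀ x else β₁ x) := by
      intro a x; rw [hΨ]
    have hcc : c * star c = (1/2 : ℂ) := by
      have h2 : ((Real.sqrt 2 : ℝ) : ℂ) * ((Real.sqrt 2 : ℝ) : ℂ) = (2:ℂ) := by
        rw [← Complex.ofReal_mul, Real.mul_self_sqrt (by norm_num : (0:ℝ) ≤ 2)]
        norm_num
      rw [hc]
      simp only [RCLike.star_def, map_div₀, map_one, Complex.conj_ofReal]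
      rw [div_mul_div_comm, one_mul, h2]
    have h00 : ∑ x, β₀ x * star (β₀ x) = 1 := by
      rw [sum_mul_star_self' β₀, hb0]; norm_num
    have h11 : ∑ x, β₁ x * star (β₁ x) = 1 := by
      rw [sum_mul_star_self' β₁, hb1]; norm_num
    have h10 : ∑ x, β₁ x * star (β₀ x) = 0 := by
      rw [← horth]
      exact Finset.sum_congr rfl fun x _ => by rw [mul_comm]
    have h01 : ∑ x, β₀ x * star (β₁ x) = 0 := by
      have : ∑ x, β₀ x * star (β₁ x) = star (∑ x, star (β₀ x) * β₁ x) := by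
        rw [star_sum]
        refine Finset.sum_congr rfl fun x _ => ?_
        rw [star_mul, star_star, mul_comm]
      rw [this, horth, star_zero]
    have hmulc : ∀ u v : Fin d → ℂ,
        (∑ x, (c * u x) * star (c * v x)) = (c * star c) * ∑ x, u x * star (v x) := by
      intro u v
      rw [Finset.mul_sum]
      refine Finset.sum_congr rfl fun x _ => ?_
      rw [star_mul]
      ring
    have hinner : ∀ a b : Fin 2,
        ∑ x, (if a = 0 then β₀ x else β₁ x) * star (if b = 0 then β₀ x else β₁ x)
          = if a = b then (1:ℂ) else 0 := by
      intro a b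
      fin_cases a <;> fin_cases b <;> simp only [Fin.zero_eta, Fin.mk_one, Fin.isValue,
        one_ne_zero, zero_ne_one, if_true, if_false, reduceIte] <;>
        first
          | rw [h00]
          | rw [h01]
          | rw [h10]
          | rw [h11]
    have htr : ∀ a b : Fin 2,
        (Matrix.of fun x y : Fin d => Ψ (a, x) * star (Ψ (b, y))).trace
          = if a = b then (1/2 : ℂ) else 0 := by
      intro a b
      have h1 : (Matrix.of fun x y : Fin d => Ψ (a, x) * star (Ψ (b, y))).trace
          = ∑ x, Ψ (a, x) * star (Ψ (b, x)) := by
        simp [Matrix.trace, Matrix.diag]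
      rw [h1]
      simp only [hΨ']
      rw [hmulc, hinner a b, hcc]
      split_ifs <;> norm_num
    have heq : (Matrix.of fun p q : Fin 2 × Fin d =>
          τ (Matrix.of fun x y : Fin d => Ψ (p.1, x) * star (Ψ (q.1, y))) p.2 q.2)
        = Matrix.of fun p q : Fin 2 × Fin d =>
            ((d * lam / 2 : ℝ) : ℂ) * (if p = q then 1 else 0)
              - ((lam + 1 : ℝ) : ℂ) * (Ψ p * star (Ψ q)) := by
      ext p q
      rw [Matrix.of_apply, Matrix.of_apply, hτ, Matrix.sub_apply, Matrix.smul_apply,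
        Matrix.smul_apply, Matrix.one_apply, htr p.1 q.1, Matrix.of_apply]
      have hp : Ψ (p.1, p.2) = Ψ p := rfl
      have hq : Ψ (q.1, q.2) = Ψ q := rfl
      rw [hp, hq]
      have hpq : (if p = q then (1:ℂ) else 0)
          = (if p.1 = q.1 then (1:ℂ) else 0) * (if p.2 = q.2 then 1 else 0) := by
        by_cases h1 : p.1 = q.1 <;> by_cases h2 : p.2 = q.2 <;>
          simp [Prod.ext_iff, h1, h2]
      rw [hpq]
      simp only [smul_eq_mul]
      split_ifs <;> push_cast <;> ring
    have hsum : ∑ p : Fin 2 × Fin d, ‖Ψ p‖ ^ 2 = 1 := by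
      have habs : ∀ z : ℂ, ‖c * z‖ ^ 2 = 1/2 * ‖z‖ ^ 2 := by
        intro z
        rw [norm_mul, mul_pow]
        congr 1
        rw [hc]
        rw [show (1 / (Real.sqrt 2 : ℝ) : ℂ) = ((1 / Real.sqrt 2 : ℝ) : ℂ) by push_cast; ring]
        rw [Complex.norm_real, Real.norm_of_nonneg (by positivity)]
        rw [div_pow, one_pow, Real.sq_sqrt (by norm_num : (0:ℝ) ≤ 2)]
      rw [Fintype.sum_prod_type, Fin.sum_univ_two]
      simp only [hΨ']
      simp only [if_true, reduceIte, one_ne_zero]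
      simp only [habs]
      rw [← Finset.mul_sum, ← Finset.mul_sum, hb0, hb1]
      norm_num
    have hineq : (lam + 1) * ∑ p : Fin 2 × Fin d, ‖Ψ p‖ ^ 2 ≤ d * lam / 2 := by
      rw [hsum, mul_one]
      have hdl : (0:ℝ) < (d:ℝ) - 2 := by linarith
      rw [div_le_iff₀ hdl] at hl2
      nlinarith
    rw [heq]
    exact rank_one_bound' Ψ (d * lam / 2) (lam + 1) (by linarith) hineq
end
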